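/- Let A ∈ ℝ_{≥0}^{m×n} and B ∈ ℝ_{≥0}^{m'×n'} be entrywise nonnegative matrices, and let A ⊕ B denote the block-diagonal matrix with blocks A and B (and zero off-diagonal blocks). Then τ₊(A ⊕ B) = τ₊(A) + τ₊(B). -/

import Mathlib

open Matrix

/-- The set of atoms `𝒜₊(A)`: rank-at-most-one matrices `R` with `0 ≤ R ≤ A` entrywise. -/
noncomputable def Aplus {m n : Type*} [Fintype m] [Fintype n]
    (A : Matrix m n ℝ) : Set (Matrix m n ℝ) :=
  {R | R.rank ≤ 1 ∧ ∀ i j, 0 ≤ R i j ∧ R i j ≤ A i j}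

/-- `τ₊(A)`: supremum of `L(A)` over linear functionals `L` with `L ≤ 1` on `𝒜₊(A)`. -/
noncomputable def tauPlus {m n : Type*} [Fintype m] [Fintype n]
    (A : Matrix m n ℝ) : ℝ :=
  sSup {x | ∃ L : Matrix m n ℝ →ₗ[ℝ] ℝ, (∀ R ∈ Aplus A, L R ≤ 1) ∧ L A = x}

/-!
An atom of `A ⊕ B` vanishes on the off-diagonal blocks, and since its `2 × 2` minors vanish, one
of its two diagonal blocks is zero as well: the atoms of `A ⊕ B` are exactly the atoms of `A` and
of `B` placed in their blocks. Hence a functional feasible for `A ⊕ B` restricts to feasible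
functionals for `A` and `B`, two feasible functionals glue along the diagonal blocks, and the
feasible values `L(A ⊕ B)` form the Minkowski sum of those for `A` and for `B`. Testing against
the atoms `single i j (A i j)`, which sum to `A`, bounds these sets above, and `sSup` is additive
on Minkowski sums of nonempty sets bounded above.
-/

namespace Matrix

variable {m n m' n' R : Type*} [Fintype n] [Fintype n']

theorem rank_single_le_one [Field R] [DecidableEq m] [DecidableEq n] (i : m) (j : n) (c : R) :
    (single i j c).rank ≤ 1 := by
  have : single i j c = vecMulVec (c • Pi.single i 1) (Pi.single j 1) := by
    rw [smul_vecMulVec, ← single_eq_single_vecMulVec_single, smul_single, smul_eq_mul, mul_one]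
  exact this ▸ rank_vecMulVec_le _ _

theorem rank_fromBlocks_zero_zero_zero_le [Field R] [Fintype m] [DecidableEq m] [DecidableEq n]
    (M : Matrix m n R) :
    (fromBlocks M 0 0 (0 : Matrix m' n' R)).rank ≤ M.rank := by
  have : fromBlocks M 0 0 (0 : Matrix m' n' R) =
      fromRows (1 : Matrix m m R) 0 * M * fromCols (1 : Matrix n n R) 0 := by
    ext (i | i) (j | j) <;> simp
  rw [this]
  exact (rank_mul_le_left _ _).trans (rank_mul_le_right _ _)

theorem rank_fromBlocks_zero_zero_zero_le' [Field R] [Fintype m'] [DecidableEq m']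
    [DecidableEq n'] (M : Matrix m' n' R) :
    (fromBlocks (0 : Matrix m n R) 0 0 M).rank ≤ M.rank := by
  rw [← fromBlocks_submatrix_sum_swap_sum_swap]
  exact (rank_submatrix _ (Equiv.sumComm _ _) (Equiv.sumComm _ _)).trans_le
    (rank_fromBlocks_zero_zero_zero_le M)

theorem mul_eq_mul_of_rank_le_one [Field R] {M : Matrix m n R} (hM : M.rank ≤ 1)
    (i i' : m) (j j' : n) : M i j * M i' j' = M i j' * M i' j := by
  by_contra hne
  have hdet : (M.submatrix ![i, i'] ![j, j']).det ≠ 0 := by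
    rw [det_fin_two]
    simpa [sub_eq_zero] using hne
  have := (rank_submatrix_le M ![i, i'] ![j, j']).trans hM
  rw [rank_of_isUnit _ (isUnit_iff_isUnit_det _ |>.mpr hdet.isUnit)] at this
  simp at this

end Matrix

section Atoms

variable {m n m' n' : Type*} [Fintype m] [Fintype n] [Fintype m'] [Fintype n']
  [DecidableEq m] [DecidableEq n] [DecidableEq m'] [DecidableEq n']

theorem single_mem_Aplus {A : Matrix m n ℝ} (hA : ∀ i j, 0 ≤ A i j) (i : m) (j : n) :
    single i j (A i j) ∈ Aplus A := by
  refine ⟨rank_single_le_one i j _, fun i' j' => ?_⟩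
  by_cases h : i = i' ∧ j = j'
  · obtain ⟨rfl, rfl⟩ := h
    simpa using hA i j
  · simpa [single, h] using hA i' j'

theorem mem_Aplus_fromBlocks_iff {A : Matrix m n ℝ} {B : Matrix m' n' ℝ}
    (hA : ∀ i j, 0 ≤ A i j) (hB : ∀ i j, 0 ≤ B i j) {X : Matrix (m ⊕ m') (n ⊕ n') ℝ} :
    X ∈ Aplus (fromBlocks A 0 0 B) ↔
      (∃ R ∈ Aplus A, X = fromBlocks R 0 0 0) ∨ ∃ S ∈ Aplus B, X = fromBlocks 0 0 0 S := by
  constructor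
  · rintro ⟨hrank, hX⟩
    have hX₁₂ (i j) : X (.inl i) (.inr j) = 0 :=
      le_antisymm (by simpa using (hX (.inl i) (.inr j)).2) (hX _ _).1
    have hX₂₁ (i j) : X (.inr i) (.inl j) = 0 :=
      le_antisymm (by simpa using (hX (.inr i) (.inl j)).2) (hX _ _).1
    have hX_eq : X = fromBlocks X.toBlocks₁₁ 0 0 X.toBlocks₂₂ := by
      ext (i | i) (j | j) <;> simp [toBlocks₁₁, toBlocks₂₂, hX₁₂, hX₂₁]
    have h₁₁ : X.toBlocks₁₁ ∈ Aplus A :=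
      ⟨(rank_submatrix_le X _ _).trans hrank,
        fun i j => by simpa [toBlocks₁₁] using hX (.inl i) (.inl j)⟩
    have h₂₂ : X.toBlocks₂₂ ∈ Aplus B :=
      ⟨(rank_submatrix_le X _ _).trans hrank,
        fun i j => by simpa [toBlocks₂₂] using hX (.inr i) (.inr j)⟩
    by_cases hzero : X.toBlocks₂₂ = 0
    · exact .inl ⟨_, h₁₁, hzero ▸ hX_eq⟩
    · refine .inr ⟨_, h₂₂, ?_⟩
      obtain ⟨i', j', hij'⟩ : ∃ i' j', X (.inr i') (.inr j') ≠ 0 := by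
        by_contra! h
        exact hzero (ext h)
      have : X.toBlocks₁₁ = 0 := by
        ext i j
        have hmul := mul_eq_mul_of_rank_le_one hrank (.inl i) (.inr i') (.inl j) (.inr j')
        rw [hX₁₂, zero_mul, mul_eq_zero] at hmul
        exact hmul.resolve_right hij'
      rwa [this] at hX_eq
  · rintro (⟨R, ⟨hrank, hR⟩, rfl⟩ | ⟨S, ⟨hrank, hS⟩, rfl⟩)
    · refine ⟨(rank_fromBlocks_zero_zero_zero_le R).trans hrank, ?_⟩
      rintro (i | i) (j | j) <;> simp [hR, hB]
    · refine ⟨(rank_fromBlocks_zero_zero_zero_le' S).trans hrank, ?_⟩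
      rintro (i | i) (j | j) <;> simp [hS, hA]

end Atoms

open scoped Pointwise

section TauPlus

variable {m n m' n' : Type*} [Fintype m] [Fintype n] [Fintype m'] [Fintype n']

def tauPlusValues (A : Matrix m n ℝ) : Set ℝ :=
  {x | ∃ L : Matrix m n ℝ →ₗ[ℝ] ℝ, (∀ R ∈ Aplus A, L R ≤ 1) ∧ L A = x}

theorem tauPlus_eq_sSup_tauPlusValues (A : Matrix m n ℝ) :
    tauPlus A = sSup (tauPlusValues A) := rfl

theorem zero_mem_tauPlusValues (A : Matrix m n ℝ) : 0 ∈ tauPlusValues A :=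
  ⟨0, fun _ _ => zero_le_one, rfl⟩

theorem bddAbove_tauPlusValues [DecidableEq m] [DecidableEq n] {A : Matrix m n ℝ}
    (hA : ∀ i j, 0 ≤ A i j) : BddAbove (tauPlusValues A) := by
  refine ⟨Fintype.card m * Fintype.card n, ?_⟩
  rintro _ ⟨L, hL, rfl⟩
  calc L A = ∑ i, ∑ j, L (single i j (A i j)) := by
        conv_lhs => rw [matrix_eq_sum_single A]
        simp only [map_sum]
    _ ≤ ∑ _i : m, ∑ _j : n, 1 :=
        Finset.sum_le_sum fun i _ => Finset.sum_le_sum fun j _ => hL _ (single_mem_Aplus hA i j)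
    _ = Fintype.card m * Fintype.card n := by simp

variable (m n m' n') in
@[simps]
def fromDiagBlocksLinearMap :
    Matrix m n ℝ × Matrix m' n' ℝ →ₗ[ℝ] Matrix (m ⊕ m') (n ⊕ n') ℝ where
  toFun X := fromBlocks X.1 0 0 X.2
  map_add' _ _ := by simp [fromBlocks_add]
  map_smul' _ _ := by simp [fromBlocks_smul]

variable (m n m' n') in
@[simps]
def toDiagBlocksLinearMap :
    Matrix (m ⊕ m') (n ⊕ n') ℝ →ₗ[ℝ] Matrix m n ℝ × Matrix m' n' ℝ where
  toFun X := (X.toBlocks₁₁, X.toBlocks₂₂)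
  map_add' _ _ := rfl
  map_smul' _ _ := rfl

theorem tauPlusValues_fromBlocks [DecidableEq m] [DecidableEq n] [DecidableEq m']
    [DecidableEq n'] {A : Matrix m n ℝ} {B : Matrix m' n' ℝ}
    (hA : ∀ i j, 0 ≤ A i j) (hB : ∀ i j, 0 ≤ B i j) :
    tauPlusValues (fromBlocks A 0 0 B) = tauPlusValues A + tauPlusValues B := by
  ext x
  rw [Set.mem_add]
  constructor
  · rintro ⟨L, hL, rfl⟩
    let L' := L ∘ₗ fromDiagBlocksLinearMap m n m' n'
    refine ⟨L' (A, 0), ⟨L' ∘ₗ .inl ℝ _ _, fun R hR => hL _ ?_, rfl⟩,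
      L' (0, B), ⟨L' ∘ₗ .inr ℝ _ _, fun S hS => hL _ ?_, rfl⟩, ?_⟩
    · exact (mem_Aplus_fromBlocks_iff hA hB).2 (.inl ⟨R, hR, rfl⟩)
    · exact (mem_Aplus_fromBlocks_iff hA hB).2 (.inr ⟨S, hS, rfl⟩)
    · simp [L', ← map_add, fromBlocks_add]
  · rintro ⟨_, ⟨LA, hLA, rfl⟩, _, ⟨LB, hLB, rfl⟩, rfl⟩
    refine ⟨LA.coprod LB ∘ₗ toDiagBlocksLinearMap m n m' n', fun X hX => ?_, by simp⟩
    rcases (mem_Aplus_fromBlocks_iff hA hB).1 hX with ⟨R, hR, rfl⟩ | ⟨S, hS, rfl⟩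
    · simpa using hLA R hR
    · simpa using hLB S hS

end TauPlus

/-- additivity on block-diagonal matrices:
`τ₊(A ⊕ B) = τ₊(A) + τ₊(B)`, where `A ⊕ B = [[A, 0], [0, B]]`. -/
theorem stmt9 {m n m' n' : ℕ}
    (A : Matrix (Fin m) (Fin n) ℝ) (B : Matrix (Fin m') (Fin n') ℝ)
    (hA : ∀ i j, 0 ≤ A i j) (hB : ∀ i j, 0 ≤ B i j) :
    tauPlus (Matrix.fromBlocks A 0 0 B) = tauPlus A + tauPlus B := by
  simp only [tauPlus_eq_sSup_tauPlusValues, tauPlusValues_fromBlocks hA hB]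
  exact csSup_add ⟨0, zero_mem_tauPlusValues A⟩ (bddAbove_tauPlusValues hA)
    ⟨0, zero_mem_tauPlusValues B⟩ (bddAbove_tauPlusValues hB)
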